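/- arXiv:1109.5269 — 11 statements merged into one kernel-verified Lean document; each statement's English description precedes it below -/
import Mathlib

section
/- Two strings S and S' of equal length parameterize-match (i.e., there exists an injective function f on symbols with S'[j] = f(S[j]) for all j) if and only if their predecessor strings are equal, where the predecessor string pred(S)[j] is the smallest positive d with S[j] = S[j-d], or 0 if no such d exists. -/
/-- Predecessor value: smallest positive `d ≤ j` with `S (j-d) = S j`, or 0 if none. -/
noncomputable def predVal {α : Type*} (S : ℕ → α) (j : ℕ) : ℕ :=
  sInf {d : ℕ | 0 < d ∧ d ≤ j ∧ S (j - d) = S j}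

/-- Parameterized match between the length-`n` strings `S` and `S'`. -/
def PMatch {α : Type*} (n : ℕ) (S S' : ℕ → α) : Prop :=
  ∃ f : α → α, Function.Injective f ∧ ∀ j < n, S' j = f (S j)

/-- `ρ` is a p-period of the length-`m` string `P`. -/
def IsPPeriod {α : Type*} (m : ℕ) (P : ℕ → α) (ρ : ℕ) : Prop :=
  0 < ρ ∧ ρ < m ∧ PMatch (m - ρ) P (fun k => P (ρ + k))

/-- `ρ` is the p-period (the smallest one) of the length-`m` string `P`. -/
def IsMinPPeriod {α : Type*} (m : ℕ) (P : ℕ → α) (ρ : ℕ) : Prop :=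
  IsPPeriod m P ρ ∧ ∀ ρ', IsPPeriod m P ρ' → ρ ≤ ρ'

/-- The p-period of the length-`n` string `P`. -/
noncomputable def pPeriod {α : Type*} (n : ℕ) (P : ℕ → α) : ℕ :=
  sInf {ρ | IsPPeriod n P ρ}

/-- `a` is the smallest index such that every symbol of the length-`m` string `P`
occurs in `P[0..a]`. -/
def MinAlphaIndex {α : Type*} (m : ℕ) (P : ℕ → α) (a : ℕ) : Prop :=
  (∀ j < m, ∃ i ≤ a, P i = P j) ∧ ∀ a' < a, ¬ (∀ j < m, ∃ i ≤ a', P i = P j)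

/-- If the predecessor strings agree, equal symbols in `S` force equal symbols in `S'`. -/
lemma pred_eq_imp_symbol_eq {α : Type*} {n : ℕ} {S S' : ℕ → α}
    (hpred : ∀ j < n, predVal S j = predVal S' j) :
    ∀ m j k, k - j = m → j ≤ k → k < n → S j = S k → S' j = S' k := by
  intro m
  induction m using Nat.strong_induction_on with
  | _ m ih =>
    intro j k hm hjk hkn hS
    rcases eq_or_lt_of_le hjk with rfl | hlt
    · rfl
    · have hne : {d : ℕ | 0 < d ∧ d ≤ k ∧ S (k - d) = S k}.Nonempty :=
        ⟨k - j, Nat.sub_pos_of_lt hlt, Nat.sub_le _ _, by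
          rw [Nat.sub_sub_self hjk]; exact hS⟩
      set d₀ : ℕ := sInf {d : ℕ | 0 < d ∧ d ≤ k ∧ S (k - d) = S k} with hd₀def
      have hd₀ : d₀ ∈ {d : ℕ | 0 < d ∧ d ≤ k ∧ S (k - d) = S k} := Nat.sInf_mem hne
      have hd₀le : d₀ ≤ k - j := Nat.sInf_le ⟨Nat.sub_pos_of_lt hlt, Nat.sub_le _ _, by
        rw [Nat.sub_sub_self hjk]; exact hS⟩
      have hpv : predVal S' k = d₀ := by rw [← hpred k hkn]; rfl
      have hne' : {d : ℕ | 0 < d ∧ d ≤ k ∧ S' (k - d) = S' k}.Nonempty := by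
        by_contra hemp
        rw [Set.not_nonempty_iff_eq_empty] at hemp
        have hpos := hd₀.1
        have : predVal S' k = 0 := by rw [predVal, hemp, Nat.sInf_empty]
        omega
      have hd₀' : d₀ ∈ {d : ℕ | 0 < d ∧ d ≤ k ∧ S' (k - d) = S' k} := by
        have := Nat.sInf_mem hne'
        rwa [show sInf {d : ℕ | 0 < d ∧ d ≤ k ∧ S' (k - d) = S' k} = d₀ from hpv] at this
      have hpos0 : 0 < d₀ := hd₀.1
      have h1 : S j = S (k - d₀) := by rw [hd₀.2.2]; exact hS
      have h2 : S' j = S' (k - d₀) := by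
        refine ih ((k - d₀) - j) (by omega) j (k - d₀) rfl (by omega) (by omega) h1
      rw [h2, hd₀'.2.2]

/-- Two equal-length strings parameterize-match iff their predecessor strings are equal. -/
theorem pmatch_iff_pred_eq {α : Type*} (n : ℕ) (S S' : ℕ → α) :
    PMatch n S S' ↔ ∀ j < n, predVal S j = predVal S' j := by
  constructor
  · rintro ⟨f, hf, hfj⟩ j hj
    have hset : {d : ℕ | 0 < d ∧ d ≤ j ∧ S (j - d) = S j}
        = {d : ℕ | 0 < d ∧ d ≤ j ∧ S' (j - d) = S' j} := by
      ext d
      simp only [Set.mem_setOf_eq]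
      constructor <;> rintro ⟨h1, h2, h3⟩ <;> refine ⟨h1, h2, ?_⟩
      · rw [hfj (j - d) (lt_of_le_of_lt (Nat.sub_le _ _) hj), hfj j hj, h3]
      · have := h3
        rw [hfj (j - d) (lt_of_le_of_lt (Nat.sub_le _ _) hj), hfj j hj] at this
        exact hf this
    rw [predVal, predVal, hset]
  · intro hpred
    classical
    have hkey : ∀ j k, j < n → k < n → S j = S k → S' j = S' k := by
      intro j k hjn hkn hS
      rcases le_total j k with h | h
      · exact pred_eq_imp_symbol_eq hpred (k - j) j k rfl h hkn hS
      · exact (pred_eq_imp_symbol_eq hpred (j - k) k j rfl h hjn hS.symm).symm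
    set s : Set α := S '' Set.Iio n with hs
    have hsfin : s.Finite := (Set.finite_Iio n).image S
    have hrep : ∀ x : s, ∃ j, j < n ∧ S j = (x : α) := by
      rintro ⟨x, j, hj, hSj⟩
      exact ⟨j, hj, hSj⟩
    let F : s → α := fun x => S' (hrep x).choose
    have hFinj : Function.Injective F := by
      intro x y hxy
      obtain ⟨hx1, hx2⟩ := (hrep x).choose_spec
      obtain ⟨hy1, hy2⟩ := (hrep y).choose_spec
      have hS'S : S' ((hrep y).choose) = S' ((hrep x).choose) := hxy.symm
      -- use the reverse direction : pred S' = pred S on range n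
      have hpred' : ∀ j < n, predVal S' j = predVal S j := fun j hj => (hpred j hj).symm
      have hkey' : ∀ j k, j < n → k < n → S' j = S' k → S j = S k := by
        intro j k hjn hkn hS'
        rcases le_total j k with h | h
        · exact pred_eq_imp_symbol_eq hpred' (k - j) j k rfl h hkn hS'
        · exact (pred_eq_imp_symbol_eq hpred' (j - k) k j rfl h hjn hS'.symm).symm
      have : S ((hrep y).choose) = S ((hrep x).choose) := hkey' _ _ hy1 hx1 hS'S
      apply Subtype.ext
      rw [← hx2, ← hy2, this]
    obtain ⟨g, hg⟩ : ∃ g : α ≃ α, ∀ x : s, g x = F x := by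
      cases finite_or_infinite α with
      | inl h => exact Cardinal.extend_function_finite ⟨F, hFinj⟩ ⟨Equiv.refl α⟩
      | inr h =>
        refine Cardinal.extend_function_of_lt ⟨F, hFinj⟩ ?_ ⟨Equiv.refl α⟩
        exact hsfin.lt_aleph0.trans_le (Cardinal.aleph0_le_mk α)
    refine ⟨g, g.injective, ?_⟩
    intro j hj
    have hmem : S j ∈ s := ⟨j, hj, rfl⟩
    have hgx : g (S j) = F ⟨S j, hmem⟩ := hg ⟨S j, hmem⟩
    obtain ⟨hc1, hc2⟩ := (hrep ⟨S j, hmem⟩).choose_spec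
    have : S' j = S' ((hrep ⟨S j, hmem⟩).choose) := hkey j _ hj hc1 hc2.symm
    rw [hgx]
    exact this
end

section
/- For any string S, any indices a <= j < |S|, the predecessor string of the suffix satisfies: pred(S[a..|S|-1])[j-a] equals pred(S)[j] if pred(S)[j] > 0 and pred(S)[j] <= j - a, and equals 0 otherwise. -/
/-- Predecessor values of a suffix: they agree with the predecessor values of the whole
string when the latter do not point before the start of the suffix, and are 0 otherwise. -/
theorem predVal_suffix {α : Type*} (S : ℕ → α) (n a j : ℕ) (haj : a ≤ j) (hjn : j < n) :
    predVal (fun k => S (a + k)) (j - a) =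
      if 0 < predVal S j ∧ predVal S j ≤ j - a then predVal S j else 0 := by
  have hset : {d : ℕ | 0 < d ∧ d ≤ j - a ∧ S (a + (j - a - d)) = S (a + (j - a))}
      = {d : ℕ | 0 < d ∧ d ≤ j ∧ S (j - d) = S j} ∩ {d | d ≤ j - a} := by
    ext d
    simp only [Set.mem_setOf_eq, Set.mem_inter_iff]
    constructor
    · rintro ⟨hd, hdja, he⟩
      exact ⟨⟨hd, hdja.trans (Nat.sub_le _ _), by rwa [show a + (j - a - d) = j - d by omega, show a + (j - a) = j by omega] at he⟩, hdja⟩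
    · rintro ⟨⟨hd, hdj, he⟩, hdja⟩
      refine ⟨hd, hdja, ?_⟩
      rw [show a + (j - a - d) = j - d by omega, show a + (j - a) = j by omega]
      exact he
  have hpv : predVal (fun k => S (a + k)) (j - a)
      = sInf ({d : ℕ | 0 < d ∧ d ≤ j ∧ S (j - d) = S j} ∩ {d | d ≤ j - a}) := by
    unfold predVal
    rw [← hset]
  rw [hpv]
  split_ifs with h
  · obtain ⟨h1, h2⟩ := h
    have hne : {d : ℕ | 0 < d ∧ d ≤ j ∧ S (j - d) = S j}.Nonempty := by
      by_contra hc
      rw [Set.not_nonempty_iff_eq_empty] at hc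
      unfold predVal at h1
      rw [hc] at h1
      simp at h1
    have hmem := Nat.sInf_mem hne
    have hmem2 : predVal S j ∈ {d : ℕ | 0 < d ∧ d ≤ j ∧ S (j - d) = S j} ∩ {d | d ≤ j - a} :=
      ⟨hmem, h2⟩
    refine le_antisymm (Nat.sInf_le hmem2) ?_
    have hne' := Nat.sInf_mem (⟨_, hmem2⟩ : ({d : ℕ | 0 < d ∧ d ≤ j ∧ S (j - d) = S j} ∩ {d | d ≤ j - a}).Nonempty)
    exact Nat.sInf_le hne'.1
  · have : {d : ℕ | 0 < d ∧ d ≤ j ∧ S (j - d) = S j} ∩ {d | d ≤ j - a} = ∅ := by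
      ext d
      simp only [Set.mem_inter_iff, Set.mem_setOf_eq, Set.mem_empty_iff_false, iff_false]
      rintro ⟨hdT, hdja⟩
      have hle : predVal S j ≤ d := Nat.sInf_le hdT
      have hne : {d : ℕ | 0 < d ∧ d ≤ j ∧ S (j - d) = S j}.Nonempty := ⟨d, hdT⟩
      have hmem := Nat.sInf_mem hne
      exact h ⟨hmem.1, hle.trans hdja⟩
    rw [this]
    simp
end

section
/- Let P be a string of length m with p-period rho, i.e., rho is the smallest positive integer such that P[0..m-1-rho] parameterize-matches P[rho..m-1]. Then for every residue j in [0, rho), there exists a threshold k_j and a positive constant c_j such that pred(P)[j + k*rho] = 0 for all k < k_j, and pred(P)[j + k*rho] = c_j for all k >= k_j (whenever j + k*rho < m). -/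
/-- Along each residue class modulo the p-period, the predecessor values of P are first 0
and then equal to a fixed positive constant. -/
theorem predVal_residue_structure {α : Type*} (m : ℕ) (P : ℕ → α) (ρ : ℕ)
    (hρ : IsMinPPeriod m P ρ) :
    ∀ j < ρ, ∃ kj cj : ℕ, 0 < cj ∧ ∀ k : ℕ, j + k * ρ < m →
      (k < kj → predVal P (j + k * ρ) = 0) ∧ (kj ≤ k → predVal P (j + k * ρ) = cj) := by
  obtain ⟨⟨hρ0, hρm, f, hfi, hf0⟩, -⟩ := hρ
  have hf : ∀ k, k < m - ρ → P (ρ + k) = f (P k) := hf0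
  -- step lemma: if predVal P i = c > 0 and i + ρ < m then predVal P (i+ρ) = c
  have step : ∀ i c : ℕ, i + ρ < m → 0 < c → predVal P i = c → predVal P (i + ρ) = c := by
    intro i c hi hc h
    have hne : {d : ℕ | 0 < d ∧ d ≤ i ∧ P (i - d) = P i}.Nonempty := by
      by_contra h'
      rw [Set.not_nonempty_iff_eq_empty] at h'
      rw [predVal, h', Nat.sInf_empty] at h
      omega
    have hmem : c ∈ {d : ℕ | 0 < d ∧ d ≤ i ∧ P (i - d) = P i} := h ▸ Nat.sInf_mem hne
    obtain ⟨-, hci, hPc⟩ := hmem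
    have hmem' : c ∈ {d : ℕ | 0 < d ∧ d ≤ i + ρ ∧ P (i + ρ - d) = P (i + ρ)} := by
      refine ⟨hc, by omega, ?_⟩
      have e1 : i + ρ - c = ρ + (i - c) := by omega
      have e2 : i + ρ = ρ + i := by omega
      rw [e1, e2, hf _ (by omega), hf _ (by omega), hPc]
    have hlb : ∀ d ∈ {d : ℕ | 0 < d ∧ d ≤ i + ρ ∧ P (i + ρ - d) = P (i + ρ)}, c ≤ d := by
      rintro d ⟨hd0, hdle, hdeq⟩
      by_contra hlt
      push_neg at hlt
      have hdi : d ≤ i := by omega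
      have e1 : i + ρ - d = ρ + (i - d) := by omega
      have e2 : i + ρ = ρ + i := by omega
      rw [e1, e2, hf _ (by omega), hf _ (by omega)] at hdeq
      have : P (i - d) = P i := hfi hdeq
      have : c ≤ d := h ▸ Nat.sInf_le ⟨hd0, hdi, this⟩
      omega
    exact le_antisymm (Nat.sInf_le hmem') (le_csInf ⟨c, hmem'⟩ hlb)
  intro j hj
  by_cases hS : ({k : ℕ | j + k * ρ < m ∧ predVal P (j + k * ρ) ≠ 0}).Nonempty
  · set kj := sInf {k : ℕ | j + k * ρ < m ∧ predVal P (j + k * ρ) ≠ 0} with hkj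
    have hkjmem := Nat.sInf_mem hS
    obtain ⟨hkjm, hkjne⟩ := hkjmem
    refine ⟨kj, predVal P (j + kj * ρ), Nat.pos_of_ne_zero hkjne, ?_⟩
    have hconst : ∀ k, kj ≤ k → j + k * ρ < m → predVal P (j + k * ρ) = predVal P (j + kj * ρ) := by
      intro k hk
      induction k, hk using Nat.le_induction with
      | base => intro _; rfl
      | succ n hn ih =>
        intro hlt
        have hnm : j + n * ρ < m := by
          have : j + (n + 1) * ρ = j + n * ρ + ρ := by ring
          omega
        have e : j + (n + 1) * ρ = (j + n * ρ) + ρ := by ring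
        rw [e]
        exact step _ _ (by omega) (Nat.pos_of_ne_zero hkjne) (ih hnm)
    intro k hkm
    constructor
    · intro hklt
      by_contra hne
      have : kj ≤ k := Nat.sInf_le ⟨hkm, hne⟩
      omega
    · intro hle
      exact hconst k hle hkm
  · refine ⟨m, 1, one_pos, ?_⟩
    intro k hkm
    rw [Set.not_nonempty_iff_eq_empty] at hS
    have hk0 : predVal P (j + k * ρ) = 0 := by
      by_contra hne
      have : k ∈ ({k : ℕ | j + k * ρ < m ∧ predVal P (j + k * ρ) ≠ 0}) := ⟨hkm, hne⟩
      rw [hS] at this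
      exact this
    have hkm' : k < m := by nlinarith
    exact ⟨fun _ => hk0, fun h => absurd h (by omega)⟩
end

section
/- Let P have p-period rho. Then along any residue class modulo rho, the sequence of predecessor values pred(P)[j], pred(P)[j+rho], pred(P)[j+2*rho], ... cannot have two distinct nonzero values; moreover once a value is nonzero, all subsequent values in the residue class equal it. -/
lemma predVal_mem {α : Type*} (P : ℕ → α) (j : ℕ) (h : predVal P j ≠ 0) :
    0 < predVal P j ∧ predVal P j ≤ j ∧ P (j - predVal P j) = P j := by
  have hne : {d : ℕ | 0 < d ∧ d ≤ j ∧ P (j - d) = P j}.Nonempty := by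
    by_contra hn
    rw [Set.not_nonempty_iff_eq_empty] at hn
    simp [predVal, hn] at h
  exact Nat.sInf_mem hne

lemma predVal_add_period {α : Type*} {m : ℕ} {P : ℕ → α} {ρ : ℕ} (h : IsPPeriod m P ρ)
    {j : ℕ} (hj : j + ρ < m) (hne : predVal P j ≠ 0) :
    predVal P (j + ρ) = predVal P j := by
  obtain ⟨hρ0, hρm, f, hf, hfP⟩ := h
  set p := predVal P j with hp
  obtain ⟨hp0, hpj, hPp⟩ := predVal_mem P j hne
  -- p belongs to the defining set at j + ρ
  have hmem : p ∈ {d : ℕ | 0 < d ∧ d ≤ j + ρ ∧ P (j + ρ - d) = P (j + ρ)} := by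
    refine ⟨hp0, by omega, ?_⟩
    have h1 : P (ρ + (j - p)) = f (P (j - p)) := hfP _ (by omega)
    have h2 : P (ρ + j) = f (P j) := hfP _ (by omega)
    rw [show j + ρ - p = ρ + (j - p) by omega, h1, hPp,
      show j + ρ = ρ + j by omega, h2]
  have hle : predVal P (j + ρ) ≤ p := Nat.sInf_le hmem
  have hq : 0 < predVal P (j + ρ) ∧ predVal P (j + ρ) ≤ j + ρ ∧
      P (j + ρ - predVal P (j + ρ)) = P (j + ρ) := Nat.sInf_mem ⟨p, hmem⟩
  obtain ⟨hq0, hqj, hPq⟩ := hq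
  by_cases hqj' : predVal P (j + ρ) ≤ j
  · have h1 : P (ρ + (j - predVal P (j + ρ))) = f (P (j - predVal P (j + ρ))) :=
      hfP _ (by omega)
    have h2 : P (ρ + j) = f (P j) := hfP _ (by omega)
    have heq : f (P (j - predVal P (j + ρ))) = f (P j) := by
      rw [← h1, ← h2, show ρ + (j - predVal P (j + ρ)) = j + ρ - predVal P (j + ρ) by omega,
        hPq]
      congr 1; omega
    have hqmem : predVal P (j + ρ) ∈ {d : ℕ | 0 < d ∧ d ≤ j ∧ P (j - d) = P j} :=
      ⟨hq0, hqj', hf heq⟩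
    have hple : predVal P j ≤ predVal P (j + ρ) := Nat.sInf_le hqmem
    omega
  · omega

lemma predVal_iter {α : Type*} {m : ℕ} {P : ℕ → α} {ρ : ℕ} (h : IsPPeriod m P ρ) :
    ∀ k i, i + k * ρ < m → predVal P i ≠ 0 → predVal P (i + k * ρ) = predVal P i := by
  intro k
  induction k with
  | zero => simp
  | succ k IH =>
    intro i hlt hne
    have hρ0 : 0 < ρ := h.1
    have h1 : i + k * ρ < m := by nlinarith
    have h2 := IH i h1 hne
    have h3 : (i + k * ρ) + ρ < m := by nlinarith
    have := predVal_add_period h h3 (by rw [h2]; exact hne)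
    rw [show i + (k + 1) * ρ = (i + k * ρ) + ρ by ring, this, h2]

/-- Along any residue class modulo the p-period, the predecessor values cannot take two
distinct nonzero values; moreover once a value is nonzero, all subsequent values equal it. -/
theorem predVal_residue_no_two_nonzero {α : Type*} (m : ℕ) (P : ℕ → α) (ρ : ℕ)
    (hρ : IsMinPPeriod m P ρ) :
    (∀ i i' : ℕ, i % ρ = i' % ρ → i < m → i' < m →
        predVal P i ≠ 0 → predVal P i' ≠ 0 → predVal P i = predVal P i') ∧
    (∀ i i' : ℕ, i % ρ = i' % ρ → i ≤ i' → i' < m →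
        predVal P i ≠ 0 → predVal P i' = predVal P i) := by
  have hP := hρ.1
  have key : ∀ i i' : ℕ, i % ρ = i' % ρ → i ≤ i' → i' < m →
      predVal P i ≠ 0 → predVal P i' = predVal P i := by
    intro i i' hmod hle hlt hne
    have hdvd : ρ ∣ (i' - i) := (Nat.modEq_iff_dvd' hle).mp hmod
    obtain ⟨k, hk⟩ := hdvd
    rw [Nat.mul_comm] at hk
    have hi' : i' = i + k * ρ := by omega
    rw [hi']
    exact predVal_iter hP k i (by omega) hne
  exact ⟨fun i i' hmod hi hi' hne hne' => by
    rcases le_total i i' with hle | hle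
    · exact (key i i' hmod hle hi' hne).symm
    · exact key i' i hmod.symm hle hi hne',
    key⟩
end

section
/- Let P be a string of length m over alphabet Sigma, and let alpha be the smallest index such that every symbol occurring in P occurs in P[0..alpha]. Then the p-period rho of P satisfies rho >= alpha / |Sigma|. -/
/-- The p-period of P is at least alpha / |Sigma|, where alpha is the smallest index such
that every symbol of P occurs in P[0..alpha]. -/
theorem pPeriod_ge_alpha_div_card {σ : Type*} [Fintype σ] (m : ℕ) (P : ℕ → σ) (ρ a : ℕ)
    (hρ : IsMinPPeriod m P ρ) (ha : MinAlphaIndex m P a) :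
    a ≤ ρ * Fintype.card σ := by
  obtain ⟨⟨hρ0, hρm, f, hf, hmatch⟩, -⟩ := hρ
  obtain ⟨h1, h2⟩ := ha
  rcases Nat.eq_zero_or_pos a with rfl | ha0
  · exact Nat.zero_le _
  have ham : a < m := by
    by_contra h
    push_neg at h
    exact h2 (m - 1) (by omega) (fun j hj => ⟨j, by omega, rfl⟩)
  -- a is the first occurrence of P a
  have hfa : ∀ i < a, P i ≠ P a := by
    have h3 := h2 (a - 1) (by omega)
    push_neg at h3
    obtain ⟨j, hj, hji⟩ := h3
    obtain ⟨i, hi, hPi⟩ := h1 j hj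
    have hia : i = a := by
      by_contra h'
      exact hji i (by omega) hPi
    subst hia
    intro i' hi' hPi'
    exact hji i' (by omega) (hPi'.trans hPi)
  -- step: first occurrences propagate backwards by ρ
  have step : ∀ j, ρ ≤ j → j < m → (∀ i < j, P i ≠ P j) →
      ∀ i < j - ρ, P i ≠ P (j - ρ) := by
    intro j hj1 hj2 hfo i hi hPi
    have e1 : P (ρ + i) = f (P i) := hmatch i (by omega)
    have e2 : P (ρ + (j - ρ)) = f (P (j - ρ)) := hmatch (j - ρ) (by omega)
    have e3 : ρ + (j - ρ) = j := by omega
    have : P (ρ + i) = P j := by rw [e1, hPi, ← e2, e3]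
    exact hfo (ρ + i) (by omega) this
  -- all positions a - k*ρ for k ≤ a/ρ are first occurrences
  have key : ∀ k ≤ a / ρ, ∀ i < a - k * ρ, P i ≠ P (a - k * ρ) := by
    intro k
    induction k with
    | zero => intro _ ; simpa using hfa
    | succ n ih =>
      intro hk
      have hnρ : (n + 1) * ρ ≤ a := by
        calc (n + 1) * ρ ≤ (a / ρ) * ρ := Nat.mul_le_mul_right ρ hk
        _ ≤ a := Nat.div_mul_le_self a ρ
      have hexp : (n + 1) * ρ = n * ρ + ρ := by ring
      have h := step (a - n * ρ) (by omega) (by omega) (ih (by omega))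
      have e : a - n * ρ - ρ = a - (n + 1) * ρ := by
        have : (n + 1) * ρ = n * ρ + ρ := by ring
        omega
      rwa [e] at h
  -- the symbols at these positions are pairwise distinct
  have hinj : Function.Injective (fun k : Fin (a / ρ + 1) => P (a - k * ρ)) := by
    intro k k' hkk
    by_contra hne
    have hne' : (k : ℕ) ≠ (k' : ℕ) := fun h => hne (Fin.ext h)
    rcases lt_or_gt_of_ne hne' with h | h
    · have hk' : (k' : ℕ) ≤ a / ρ := by omega
      have hmul : (k' : ℕ) * ρ ≤ a :=
        le_trans (Nat.mul_le_mul_right ρ hk') (Nat.div_mul_le_self a ρ)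
      have hlt : a - k' * ρ < a - k * ρ := by
        have : (k : ℕ) * ρ < (k' : ℕ) * ρ := (Nat.mul_lt_mul_right hρ0).mpr h
        omega
      exact key k (by omega) _ hlt hkk.symm
    · have hk' : (k : ℕ) ≤ a / ρ := by omega
      have hmul : (k : ℕ) * ρ ≤ a :=
        le_trans (Nat.mul_le_mul_right ρ hk') (Nat.div_mul_le_self a ρ)
      have hlt : a - k * ρ < a - k' * ρ := by
        have : (k' : ℕ) * ρ < (k : ℕ) * ρ := (Nat.mul_lt_mul_right hρ0).mpr h
        omega
      exact key k' (by omega) _ hlt hkk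
  have hcard : a / ρ + 1 ≤ Fintype.card σ := by
    simpa using Fintype.card_le_of_injective _ hinj
  have hdiv := Nat.div_add_mod a ρ
  have hmod : a % ρ < ρ := Nat.mod_lt a hρ0
  have h5 : ρ * (a / ρ + 1) ≤ ρ * Fintype.card σ := Nat.mul_le_mul_left ρ hcard
  have h6 : ρ * (a / ρ + 1) = ρ * (a / ρ) + ρ := by ring
  omega
end

section
/- Let P have length m and p-period rho, and let alpha be the smallest index such that all distinct symbols of P occur in P[0..alpha]. Then rho is an exact period of the string pred(P)[alpha+1..m-1], i.e., for all j with alpha + 1 + rho <= j <= m-1, pred(P)[j - rho] = pred(P)[j]. -/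
/-- The p-period is an exact period of the predecessor string beyond position alpha. -/
theorem pPeriod_exact_period_of_pred {α : Type*} (m : ℕ) (P : ℕ → α) (ρ a : ℕ)
    (hρ : IsMinPPeriod m P ρ) (ha : MinAlphaIndex m P a) :
    ∀ j : ℕ, a + 1 + ρ ≤ j → j < m → predVal P (j - ρ) = predVal P j := by
  intro j hj hjm
  obtain ⟨⟨hρ0, hρm, f, hf, hmatch⟩, -⟩ := hρ
  obtain ⟨hcov, -⟩ := ha
  have key : ∀ d, 0 < d → d ≤ j - ρ → (P (j - ρ - d) = P (j - ρ) ↔ P (j - d) = P j) := by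
    intro d hd hdle
    have h1 : P j = f (P (j - ρ)) := by
      have := hmatch (j - ρ) (by omega)
      simpa [show ρ + (j - ρ) = j by omega] using this
    have h2 : P (j - d) = f (P (j - ρ - d)) := by
      have := hmatch (j - ρ - d) (by omega)
      simpa [show ρ + (j - ρ - d) = j - d by omega] using this
    constructor
    · intro h; rw [h1, h2, h]
    · intro h; apply hf; rw [← h1, ← h2, h]
  have hset : {d : ℕ | 0 < d ∧ d ≤ j - ρ ∧ P (j - ρ - d) = P (j - ρ)} =
      {d : ℕ | 0 < d ∧ d ≤ j - ρ ∧ P (j - d) = P j} := by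
    ext d; simp only [Set.mem_setOf_eq]
    constructor
    · rintro ⟨h1, h2, h3⟩; exact ⟨h1, h2, (key d h1 h2).mp h3⟩
    · rintro ⟨h1, h2, h3⟩; exact ⟨h1, h2, (key d h1 h2).mpr h3⟩
  have hAne : {d : ℕ | 0 < d ∧ d ≤ j - ρ ∧ P (j - ρ - d) = P (j - ρ)}.Nonempty := by
    obtain ⟨i, hi, hPi⟩ := hcov (j - ρ) (by omega)
    exact ⟨j - ρ - i, by omega, by omega,
      by rw [show j - ρ - (j - ρ - i) = i by omega, hPi]⟩
  unfold predVal
  set A := {d : ℕ | 0 < d ∧ d ≤ j - ρ ∧ P (j - ρ - d) = P (j - ρ)} with hA_def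
  set B := {d : ℕ | 0 < d ∧ d ≤ j ∧ P (j - d) = P j} with hB_def
  have hsub : A ⊆ B := by
    intro d hd
    have hd2 : d ∈ A := hd
    rw [hset] at hd2
    obtain ⟨h1, h2, h3⟩ := hd2
    exact ⟨h1, by omega, h3⟩
  have hAmem := Nat.sInf_mem hAne
  have h1 : sInf B ≤ sInf A := Nat.sInf_le (hsub hAmem)
  have hBmem := Nat.sInf_mem (hAne.mono hsub)
  have h2 : sInf A ≤ sInf B := by
    apply Nat.sInf_le
    show sInf B ∈ A
    rw [hset]
    exact ⟨hBmem.1, le_trans h1 hAmem.2.1, hBmem.2.2⟩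
  exact le_antisymm h2 h1
end

section
/- Let P parameterize-match T[i_L..i_L+m-1], let alpha be the smallest index such that all symbols of P occur in P[0..alpha], and suppose the p-period rho of P is an exact period of pred(P)[alpha+1..m-1]. Then for every j with alpha+1 <= j <= m-1, pred(T)[i_L + j] = pred(P)[j]; in particular pred(T[i_L..i_L+m-1])[j] = pred(T)[i_L + j] for those j. -/
/-- If P parameterize-matches a window of T, then beyond position alpha the global
predecessor values of T agree with those of P (and with those of the window). -/
theorem predVal_text_eq_pattern {α : Type*} (m : ℕ) (P T : ℕ → α) (ρ a iL : ℕ)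
    (hρ : IsMinPPeriod m P ρ) (ha : MinAlphaIndex m P a)
    (hper : ∀ j : ℕ, a + 1 + ρ ≤ j → j < m → predVal P (j - ρ) = predVal P j)
    (hmatch : PMatch m P (fun k => T (iL + k))) :
    ∀ j : ℕ, a + 1 ≤ j → j < m →
      predVal T (iL + j) = predVal P j ∧
      predVal (fun k => T (iL + k)) j = predVal T (iL + j) := by
  obtain ⟨f, hf, hfeq⟩ := hmatch
  intro j hj1 hj2
  obtain ⟨i, hia, hip⟩ := ha.1 j hj2
  have hij : i < j := lt_of_le_of_lt hia (Nat.lt_of_succ_le hj1)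
  set DP := {d : ℕ | 0 < d ∧ d ≤ j ∧ P (j - d) = P j} with hDP
  have hne : (j - i) ∈ DP := ⟨Nat.sub_pos_of_lt hij, Nat.sub_le _ _, by
    rw [Nat.sub_sub_self (le_of_lt hij)]; exact hip⟩
  have hd0 : sInf DP ∈ DP := Nat.sInf_mem ⟨_, hne⟩
  set d0 := sInf DP with hd0def
  obtain ⟨hd0pos, hd0j, hd0eq⟩ := hd0
  have key : ∀ d, 0 < d → d ≤ j → (T (iL + j - d) = T (iL + j) ↔ P (j - d) = P j) := by
    intro d hd hdj
    have h1 : iL + j - d = iL + (j - d) := by omega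
    have e1 : T (iL + (j - d)) = f (P (j - d)) := hfeq (j - d) (by omega)
    have e2 : T (iL + j) = f (P j) := hfeq j hj2
    rw [h1, e1, e2]
    exact hf.eq_iff
  have hTP : predVal T (iL + j) = d0 := by
    have hd0T : d0 ∈ {d : ℕ | 0 < d ∧ d ≤ iL + j ∧ T (iL + j - d) = T (iL + j)} :=
      ⟨hd0pos, by omega, (key d0 hd0pos hd0j).2 hd0eq⟩
    have hle : predVal T (iL + j) ≤ d0 := Nat.sInf_le hd0T
    have he : predVal T (iL + j) ∈ {d : ℕ | 0 < d ∧ d ≤ iL + j ∧ T (iL + j - d) = T (iL + j)} :=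
      Nat.sInf_mem ⟨_, hd0T⟩
    have hej : predVal T (iL + j) ≤ j := le_trans hle hd0j
    have hge : d0 ≤ predVal T (iL + j) := by
      apply Nat.sInf_le
      exact ⟨he.1, hej, (key _ he.1 hej).1 he.2.2⟩
    omega
  have hWP : predVal (fun k => T (iL + k)) j = d0 := by
    unfold predVal
    congr 1
    ext d
    simp only [Set.mem_setOf_eq]
    constructor
    · rintro ⟨h1, h2, h3⟩
      refine ⟨h1, h2, ?_⟩
      apply (key d h1 h2).1
      have : iL + j - d = iL + (j - d) := by omega
      rw [this]; exact h3
    · rintro ⟨h1, h2, h3⟩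
      refine ⟨h1, h2, ?_⟩
      have h4 := (key d h1 h2).2 h3
      have : iL + j - d = iL + (j - d) := by omega
      rwa [this] at h4
  have hPP : predVal P j = d0 := rfl
  exact ⟨by rw [hTP, hPP], by rw [hWP, hTP]⟩
end

section
/- Let P be a string of length m over alphabet Sigma with p-period rho, and let T be a text. Let X be the set of positions i within a fixed window of length 3m/2 of T at which P parameterize-matches T[i..i+m-1]. Then X can be partitioned into a set Y with |Y| <= 6|Sigma| and a set A, with max(Y) < min(A), such that A is an arithmetic progression with common difference rho. -/
/-!
Two matches at distance `e ≤ m/2` make `e` a p-period, so matches in the window are at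
least `ρ` apart. Let `a` be the first position by which every symbol of `P` has occurred.
If `a + ρ < m/2`, the maps realising the p-periods `ρ` and `d` (the distance of two matches)
commute on the alphabet of `P`, because both are determined on `P[0..a]`; this extends the
match at `i` to one at `i + ρ`, so the matches form an arithmetic progression of
difference `ρ`. Otherwise, for the last match `M` and another match `i` with `M - i ≤ a`,
the position `a - (M - i)` is the first occurrence of its symbol, which injects these matches
into `Σ`; at most one further match has `M - i > a`, since matches are `ρ` apart, all lie
within `m/2` of `M`, and `a + ρ ≥ m/2`.
-/

open Function

def IsFirstOcc {α : Type*} (P : ℕ → α) (k : ℕ) : Prop :=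
  ∀ j < k, P j ≠ P k

def windowMatches {σ : Type*} (m t : ℕ) (P T : ℕ → σ) : Set ℕ :=
  {i | t ≤ i ∧ 2 * (i + m) ≤ 2 * t + 3 * m ∧ PMatch m P (fun k => T (i + k))}

section Strings

variable {α : Type*} {m a d : ℕ} {P : ℕ → α}

theorem IsFirstOcc.eq_of_apply_eq {k l : ℕ} (hk : IsFirstOcc P k) (hl : IsFirstOcc P l)
    (h : P k = P l) : k = l := by
  rcases lt_trichotomy k l with hkl | rfl | hlk
  · exact absurd h (hl k hkl)
  · rfl
  · exact absurd h.symm (hk l hlk)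

theorem IsPPeriod.isFirstOcc_sub (hd : IsPPeriod m P d) (ha : IsFirstOcc P a) (hda : d ≤ a)
    (ham : a < m) : IsFirstOcc P (a - d) := by
  intro k hk heq
  obtain ⟨g, -, hg⟩ := hd.2.2
  dsimp only at hg
  apply ha (d + k) (by omega)
  rw [hg k (by omega), heq, ← hg (a - d) (by omega), Nat.add_sub_cancel' hda]

theorem exists_minAlphaIndex (P : ℕ → α) : ∃ a, MinAlphaIndex m P a := by
  classical
  have hex : ∃ a, ∀ j < m, ∃ i ≤ a, P i = P j := ⟨m, fun j hj => ⟨j, hj.le, rfl⟩⟩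
  exact ⟨Nat.find hex, Nat.find_spec hex, fun a' ha' => Nat.find_min hex ha'⟩

theorem MinAlphaIndex.lt (ha : MinAlphaIndex m P a) (hm : 0 < m) : a < m := by
  by_contra! h
  exact ha.2 (m - 1) (by omega) fun j hj => ⟨j, by omega, rfl⟩

theorem MinAlphaIndex.isFirstOcc (ha : MinAlphaIndex m P a) : IsFirstOcc P a := by
  intro k hk hPk
  refine ha.2 (a - 1) (by omega) fun j hj => ?_
  obtain ⟨i, hia, hPi⟩ := ha.1 j hj
  rcases hia.lt_or_eq with hia | rfl
  · exact ⟨i, by omega, hPi⟩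
  · exact ⟨k, by omega, hPk.trans hPi⟩

theorem exists_factor_of_pmatch_of_pmatch [Finite α] {n i : ℕ} {T : ℕ → α}
    (h₁ : PMatch n P (fun k => T (i + k))) (h₂ : PMatch n P (fun k => T (i + d + k))) :
    ∃ h g : α → α, Injective h ∧ Injective g ∧ (∀ k < n, T (i + k) = h (P k)) ∧
      (∀ k < n, T (i + d + k) = h (g (P k))) ∧ ∀ k < n - d, P (d + k) = g (P k) := by
  obtain ⟨h, hinj, hh⟩ := h₁
  obtain ⟨h', hinj', hh'⟩ := h₂
  dsimp only at hh hh'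
  have hsurj : Surjective h := Finite.injective_iff_surjective.mp hinj
  have hhg : ∀ s, h (surjInv hsurj (h' s)) = h' s := fun s => rightInverse_surjInv hsurj _
  refine ⟨h, surjInv hsurj ∘ h', hinj, ?_, hh, fun k hk => (hh' k hk).trans (hhg _).symm,
    fun k hk => hinj ?_⟩
  · exact Injective.of_comp (f := h) (by simpa only [comp_def, hhg] using hinj')
  · rw [comp_apply, hhg, ← hh' k (by omega), ← hh (d + k) (by omega), add_assoc]

theorem isPPeriod_of_pmatch_of_pmatch [Finite α] {i : ℕ} {T : ℕ → α} (hd : 0 < d) (hdm : d < m)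
    (h₁ : PMatch m P (fun k => T (i + k))) (h₂ : PMatch m P (fun k => T (i + d + k))) :
    IsPPeriod m P d := by
  obtain ⟨-, g, -, hg, -, -, hgP⟩ := exists_factor_of_pmatch_of_pmatch h₁ h₂
  exact ⟨hd, hdm, g, hg, hgP⟩

theorem pmatch_add_of_pmatch_of_pmatch [Finite α] {ρ i : ℕ} {T : ℕ → α}
    (hρ : PMatch (m - ρ) P (fun k => P (ρ + k))) (ha : ∀ j < m, ∃ k ≤ a, P k = P j)
    (hρd : ρ < d) (had : a + ρ + d < m)
    (h₁ : PMatch m P (fun k => T (i + k))) (h₂ : PMatch m P (fun k => T (i + d + k))) :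
    PMatch m P (fun k => T (i + ρ + k)) := by
  obtain ⟨f, hf, hfP⟩ := hρ
  dsimp only at hfP
  obtain ⟨h, g, hh, -, hhP, hhgP, hgP⟩ := exists_factor_of_pmatch_of_pmatch h₁ h₂
  -- `f` and `g` commute on `P[0..a]`, hence on the whole alphabet of `P`.
  have hcomm : ∀ j < m, g (f (P j)) = f (g (P j)) := by
    intro j hj
    obtain ⟨k, hka, hkj⟩ := ha j hj
    rw [← hkj, ← hfP k (by omega), ← hgP (ρ + k) (by omega), ← hgP k (by omega),
      ← hfP (d + k) (by omega), add_left_comm]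
  refine ⟨h ∘ f, hh.comp hf, fun j hj => ?_⟩
  show T (i + ρ + j) = h (f (P j))
  rcases lt_or_ge j (m - ρ) with hjρ | hjρ
  · rw [← hfP j hjρ, ← hhP (ρ + j) (by omega), add_assoc]
  · obtain ⟨u, rfl⟩ : ∃ u, j = d + u := ⟨j - d, by omega⟩
    calc T (i + ρ + (d + u)) = T (i + d + (ρ + u)) := by congr 1; omega
      _ = h (g (f (P u))) := by rw [hhgP (ρ + u) (by omega), hfP u (by omega)]
      _ = (h ∘ f) (P (d + u)) := by rw [hcomm u (by omega), hgP u (by omega), comp_apply]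

theorem ncard_le_card_of_isPPeriod_sub [Finite α] {X : Set ℕ} {M : ℕ} (ha : IsFirstOcc P a)
    (ham : a < m) (hX : ∀ i ∈ X, i ≤ M ∧ M - i ≤ a ∧ IsPPeriod m P (M - i)) :
    X.ncard ≤ Nat.card α := by
  rw [← Set.ncard_univ]
  refine Set.ncard_le_ncard_of_injOn (fun i => P (a - (M - i))) (fun _ _ => trivial)
    fun i hi j hj hij => ?_
  obtain ⟨hiM, hia, hi⟩ := hX i hi
  obtain ⟨hjM, hja, hj⟩ := hX j hj
  have := (hi.isFirstOcc_sub ha hia ham).eq_of_apply_eq (hj.isFirstOcc_sub ha hja ham) hij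
  omega

end Strings

theorem Set.Finite.exists_eq_image_Iio_of_add_mem {X : Set ℕ} {ρ : ℕ} (hX : X.Finite)
    (hρ : 0 < ρ) (hgap : ∀ i ∈ X, ∀ j ∈ X, i < j → ρ ≤ j - i)
    (hstep : ∀ i ∈ X, ∀ j ∈ X, i < j → i + ρ ∈ X) :
    ∃ i0 L : ℕ, X = (fun k => i0 + k * ρ) '' Set.Iio L := by
  rcases X.eq_empty_or_nonempty with rfl | hne
  · exact ⟨0, 0, by simp⟩
  obtain ⟨μ, hμX, hμ⟩ : ∃ μ ∈ X, ∀ i ∈ X, μ ≤ i := Set.exists_min_image X id hX hne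
  obtain ⟨M, hMX, hM⟩ : ∃ M ∈ X, ∀ i ∈ X, i ≤ M := Set.exists_max_image X id hX hne
  have hmem : ∀ k, μ + k * ρ ≤ M → μ + k * ρ ∈ X := by
    intro k
    induction k with
    | zero => exact fun _ => by simpa using hμX
    | succ k ih =>
      intro hk
      rw [add_mul, one_mul, ← add_assoc] at hk ⊢
      exact hstep _ (ih (by omega)) M hMX (by omega)
  have hprog : ∀ i ∈ X, i = μ + (i - μ) / ρ * ρ := by
    intro i hi
    have hdiv := Nat.div_add_mod' (i - μ) ρ
    have hmod := Nat.mod_lt (i - μ) hρ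
    have := hμ i hi
    have hK := hmem ((i - μ) / ρ) (by have := hM i hi; omega)
    by_contra hne
    have := hgap _ hK i hi (by omega)
    omega
  refine ⟨μ, (M - μ) / ρ + 1, Set.ext fun x => ⟨fun hx => ⟨(x - μ) / ρ, ?_, (hprog x hx).symm⟩, ?_⟩⟩
  · exact Nat.lt_succ_of_le (Nat.div_le_div_right (by have := hM x hx; omega))
  · rintro ⟨k, hk, rfl⟩
    have := (Nat.le_div_iff_mul_le hρ).mp (Nat.lt_succ_iff.mp hk)
    exact hmem k (by have := hμ M hMX; omega)

section Window

variable {σ : Type*} {m ρ t a i j : ℕ} {P T : ℕ → σ}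

theorem windowMatches_finite : (windowMatches m t P T).Finite :=
  (Set.finite_Icc t (t + m)).subset fun _ hi => ⟨hi.1, by have := hi.2.1; omega⟩

theorem two_mul_sub_le_of_mem_windowMatches (hi : i ∈ windowMatches m t P T)
    (hj : j ∈ windowMatches m t P T) : 2 * (j - i) ≤ m := by
  have := hi.1; have := hj.2.1; omega

theorem pmatch_of_mem_windowMatches_of_lt (hj : j ∈ windowMatches m t P T) (hij : i < j) :
    PMatch m P (fun k => T (i + (j - i) + k)) := by
  rw [Nat.add_sub_cancel' hij.le]; exact hj.2.2

variable [Finite σ]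

theorem isPPeriod_sub_of_mem_windowMatches (hi : i ∈ windowMatches m t P T)
    (hj : j ∈ windowMatches m t P T) (hij : i < j) : IsPPeriod m P (j - i) := by
  have := two_mul_sub_le_of_mem_windowMatches hi hj
  exact isPPeriod_of_pmatch_of_pmatch (by omega) (by omega) hi.2.2
    (pmatch_of_mem_windowMatches_of_lt hj hij)

theorem IsMinPPeriod.le_sub_of_mem_windowMatches (hρ : IsMinPPeriod m P ρ)
    (hi : i ∈ windowMatches m t P T) (hj : j ∈ windowMatches m t P T) (hij : i < j) :
    ρ ≤ j - i :=
  hρ.2 _ (isPPeriod_sub_of_mem_windowMatches hi hj hij)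

theorem IsMinPPeriod.add_mem_windowMatches (hρ : IsMinPPeriod m P ρ)
    (ha : ∀ j < m, ∃ k ≤ a, P k = P j) (hearly : 2 * (a + ρ) < m)
    (hi : i ∈ windowMatches m t P T) (hj : j ∈ windowMatches m t P T) (hij : i < j) :
    i + ρ ∈ windowMatches m t P T := by
  rcases (hρ.le_sub_of_mem_windowMatches hi hj hij).eq_or_lt with hρij | hρij
  · rwa [hρij, Nat.add_sub_cancel' hij.le]
  have := two_mul_sub_le_of_mem_windowMatches hi hj
  have := hj.2.1
  exact ⟨by have := hi.1; omega, by omega, pmatch_add_of_pmatch_of_pmatch hρ.1.2.2 ha hρij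
    (by omega) hi.2.2 (pmatch_of_mem_windowMatches_of_lt hj hij)⟩

theorem IsMinPPeriod.exists_windowMatches_eq_image (hρ : IsMinPPeriod m P ρ)
    (ha : ∀ j < m, ∃ k ≤ a, P k = P j) (hearly : 2 * (a + ρ) < m) :
    ∃ i0 L : ℕ, windowMatches m t P T = (fun k => i0 + k * ρ) '' Set.Iio L :=
  windowMatches_finite.exists_eq_image_Iio_of_add_mem hρ.1.1
    (fun _ hi _ hj => hρ.le_sub_of_mem_windowMatches hi hj)
    (fun _ hi _ hj => hρ.add_mem_windowMatches ha hearly hi hj)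

theorem IsMinPPeriod.ncard_windowMatches_diff_le {M : ℕ} (hρ : IsMinPPeriod m P ρ)
    (ha : IsFirstOcc P a) (ham : a < m) (hlate : m ≤ 2 * (a + ρ))
    (hMX : M ∈ windowMatches m t P T) (hM : ∀ i ∈ windowMatches m t P T, i ≤ M) :
    (windowMatches m t P T \ {M}).ncard ≤ Nat.card σ + 1 := by
  set X := windowMatches m t P T
  have hsplit : X \ {M} = {i ∈ X | i < M ∧ M - i ≤ a} ∪ {i ∈ X | a < M - i} := by
    ext i
    simp only [Set.mem_sdiff, Set.mem_singleton_iff, Set.mem_union, Set.mem_ofPred_eq]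
    constructor
    · rintro ⟨hi, hiM⟩
      have := hM i hi
      by_cases h : M - i ≤ a
      exacts [Or.inl ⟨hi, by omega, h⟩, Or.inr ⟨hi, by omega⟩]
    · rintro (⟨hi, hiM, -⟩ | ⟨hi, hiM⟩) <;> exact ⟨hi, by omega⟩
  have hnear : {i ∈ X | i < M ∧ M - i ≤ a}.ncard ≤ Nat.card σ :=
    ncard_le_card_of_isPPeriod_sub ha ham fun i ⟨hi, hiM, hia⟩ =>
      ⟨hiM.le, hia, isPPeriod_sub_of_mem_windowMatches hi hMX hiM⟩
  have hfar : {i ∈ X | a < M - i}.ncard ≤ 1 := by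
    refine (Set.ncard_le_one (windowMatches_finite.subset fun _ hi => hi.1)).mpr ?_
    rintro u ⟨hu, hua⟩ u' ⟨hu', hua'⟩
    by_contra hne
    wlog huu' : u < u' generalizing u u'
    · exact this u' hu' hua' u hu hua (Ne.symm hne) (by omega)
    have := hρ.le_sub_of_mem_windowMatches hu hu' huu'
    have := two_mul_sub_le_of_mem_windowMatches hu hMX
    omega
  rw [hsplit]
  exact (Set.ncard_union_le _ _).trans (by omega)

end Window

/-- Structure of parameterized matches in a window of length 3m/2: the match positions
split into a small set Y of size at most 6|Sigma| followed by an arithmetic progression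
with common difference the p-period. -/
theorem pmatch_positions_structure {σ : Type*} [Fintype σ] (m ρ t : ℕ) (P T : ℕ → σ)
    (hρ : IsMinPPeriod m P ρ) :
    ∃ (Y A : Set ℕ) (i0 L : ℕ),
      {i : ℕ | t ≤ i ∧ 2 * (i + m) ≤ 2 * t + 3 * m ∧ PMatch m P (fun k => T (i + k))}
        = Y ∪ A ∧
      Disjoint Y A ∧
      Y.Finite ∧ Y.ncard ≤ 6 * Fintype.card σ ∧
      (∀ y ∈ Y, ∀ x ∈ A, y < x) ∧
      A = (fun k => i0 + k * ρ) '' (Set.Iio L) := by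
  show ∃ (Y A : Set ℕ) (i0 L : ℕ), windowMatches m t P T = Y ∪ A ∧ _
  have hm : 0 < m := hρ.1.1.trans hρ.1.2.1
  obtain ⟨a, ha⟩ := exists_minAlphaIndex P
  by_cases hearly : 2 * (a + ρ) < m
  · obtain ⟨i0, L, hAP⟩ := hρ.exists_windowMatches_eq_image (t := t) (T := T) ha.1 hearly
    exact ⟨∅, _, i0, L, (Set.empty_union _).symm, disjoint_bot_left, Set.finite_empty,
      by simp, by simp, hAP⟩
  rcases (windowMatches m t P T).eq_empty_or_nonempty with hX | hX
  · exact ⟨∅, ∅, 0, 0, by simp [hX], by simp, by simp, by simp, by simp, by simp⟩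
  obtain ⟨M, hMX, hM⟩ := Set.exists_max_image _ id windowMatches_finite hX
  have hY := hρ.ncard_windowMatches_diff_le ha.isFirstOcc (ha.lt hm) (by omega) hMX hM
  have hσ : 0 < Fintype.card σ := Fintype.card_pos_iff.mpr ⟨P 0⟩
  refine ⟨_ \ {M}, {M}, M, 1, (Set.sdiff_union_of_subset (by simpa using hMX)).symm,
    Set.disjoint_sdiff_left, windowMatches_finite.sdiff, ?_, ?_, by ext; simp⟩
  · rw [Nat.card_eq_fintype_card] at hY
    omega
  · rintro y ⟨hy, hyM⟩ x rfl
    exact lt_of_le_of_ne (hM y hy) hyM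
end

section
/- Any two distinct positions at which P parameterize-matches the text T are at least rho apart, where rho is the p-period of P. That is, if P parameterize-matches both T[i..i+m-1] and T[i'..i'+m-1] with i < i', then i' - i >= rho. -/
/-- Extend an injection defined on a finite subset of `α` to a permutation of `α`. -/
lemma exists_equiv_extend_of_finite {α : Type*} {s : Set α} (hs : s.Finite) (f : s ↪ α) :
    ∃ g : α ≃ α, ∀ x : s, g x = f x := by
  cases finite_or_infinite α
  · exact Cardinal.extend_function_finite f ⟨Equiv.refl α⟩
  · refine Cardinal.extend_function_of_lt f ?_ ⟨Equiv.refl α⟩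
    exact lt_of_lt_of_le hs.lt_aleph0 (Cardinal.aleph0_le_mk α)

/-- Any two distinct parameterized-match positions of P in T are at least the p-period apart. -/
theorem pmatch_positions_far_apart {α : Type*} (m ρ : ℕ) (P T : ℕ → α)
    (hρ : IsMinPPeriod m P ρ) (i i' : ℕ) (hii : i < i')
    (h1 : PMatch m P (fun k => T (i + k))) (h2 : PMatch m P (fun k => T (i' + k))) :
    ρ ≤ i' - i := by
  classical
  have hne : Nonempty α := ⟨P 0⟩
  obtain ⟨⟨hρpos, hρm, _⟩, hmin⟩ := hρ
  set δ := i' - i with hδ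
  rcases lt_or_ge δ m with hδm | hδm
  · -- show δ is a p-period
    refine hmin δ ⟨by omega, hδm, ?_⟩
    obtain ⟨f, hf, hf2⟩ := h1
    obtain ⟨g, hg, hg2⟩ := h2
    have key : ∀ k < m - δ, f (P (δ + k)) = g (P k) := by
      intro k hk
      have h1' := hf2 (δ + k) (by omega)
      have h2' := hg2 k (by omega)
      have heq : i + (δ + k) = i' + k := by omega
      simp only at h1' h2'
      rw [← h1', ← h2', heq]
    set s : Set α := P '' (Set.Iio (m - δ)) with hs
    have hsfin : s.Finite := (Set.finite_Iio _).image P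
    have hmem : ∀ a : s, ∃ k < m - δ, P k = a := by
      rintro ⟨a, k, hk, rfl⟩
      exact ⟨k, hk, rfl⟩
    -- partial map
    have hval : ∀ (a : s) (k : ℕ), k < m - δ → P k = a →
        Function.invFun f (g (a : α)) = P (δ + k) := by
      rintro a k hk hka
      rw [← hka, ← key k hk, Function.leftInverse_invFun hf]
    have hinj : Function.Injective (fun a : s => Function.invFun f (g (a : α))) := by
      rintro a b hab
      obtain ⟨k, hk, hka⟩ := hmem a
      obtain ⟨l, hl, hlb⟩ := hmem b
      have ha := hval a k hk hka
      have hb := hval b l hl hlb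
      simp only at hab
      have : P (δ + k) = P (δ + l) := by rw [← ha, ← hb, hab]
      have : f (P (δ + k)) = f (P (δ + l)) := by rw [this]
      rw [key k hk, key l hl] at this
      have hkl := hg this
      exact Subtype.ext (by rw [← hka, ← hlb, hkl])
    obtain ⟨e, he⟩ := exists_equiv_extend_of_finite hsfin ⟨_, hinj⟩
    refine ⟨e, e.injective, ?_⟩
    intro k hk
    have hks : P k ∈ s := ⟨k, hk, rfl⟩
    have := he ⟨P k, hks⟩
    simp only [Function.Embedding.coeFn_mk] at this
    rw [this, hval ⟨P k, hks⟩ k hk rfl]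
  · omega
end

section
/- The p-period of a prefix is monotone: if P is a string and r <= r', then the p-period of P[0..r-1] is at most the p-period of P[0..r'-1]. -/
lemma isPPeriod_pred {α : Type*} (P : ℕ → α) {m : ℕ} (hm : 2 ≤ m) :
    IsPPeriod m P (m - 1) := by
  classical
  refine ⟨by omega, by omega, ?_⟩
  refine ⟨Equiv.swap (P 0) (P (m - 1)), (Equiv.swap _ _).injective, ?_⟩
  intro j hj
  have hm1 : m - (m - 1) = 1 := by omega
  rw [hm1] at hj
  interval_cases j
  simp [Equiv.swap_apply_left]

lemma isPPeriod_shorten {α : Type*} (P : ℕ → α) {m m' ρ : ℕ}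
    (hp : IsPPeriod m P ρ) (hlt : ρ < m') (hle : m' ≤ m) : IsPPeriod m' P ρ := by
  obtain ⟨h1, h2, f, hf, hmatch⟩ := hp
  exact ⟨h1, hlt, f, hf, fun j hj => hmatch j (by omega)⟩

/-- The p-period of a prefix is monotone in the prefix length. -/
theorem pPeriod_prefix_mono {α : Type*} (P : ℕ → α) (r r' : ℕ) (h : r ≤ r') :
    pPeriod r P ≤ pPeriod r' P := by
  by_cases hr : r < 2
  · have : {ρ | IsPPeriod r P ρ} = ∅ := by
      ext ρ
      simp only [Set.mem_setOf_eq, Set.mem_empty_iff_false, iff_false]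
      rintro ⟨h1, h2, -⟩; omega
    simp [pPeriod, this]
  · push_neg at hr
    have hr' : 2 ≤ r' := le_trans hr h
    have hne : {ρ | IsPPeriod r' P ρ}.Nonempty := ⟨r' - 1, isPPeriod_pred P hr'⟩
    have hmem : IsPPeriod r' P (pPeriod r' P) := Nat.sInf_mem hne
    by_cases hlt : pPeriod r' P < r
    · exact Nat.sInf_le (isPPeriod_shorten P hmem hlt h)
    · push_neg at hlt
      calc pPeriod r P ≤ r - 1 := Nat.sInf_le (isPPeriod_pred P hr)
        _ ≤ pPeriod r' P := by omega
end

section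
/- Let P have p-period rho_j for the prefix P[0..j] and suppose rho_j = rho_{j+1} (consecutive prefixes have the same p-period). Then pred(P)[j - rho_j] is either 0 or equal to pred(P)[j]. -/
/-- If consecutive prefixes P[0..j] and P[0..j+1] have the same p-period ρ, then the
predecessor value at position j - ρ is 0 or equals the one at position j. -/
theorem predVal_shift_same_period {σ : Type*} (P : ℕ → σ) (j : ℕ)
    (h : pPeriod (j + 1) P = pPeriod (j + 2) P) :
    predVal P (j - pPeriod (j + 1) P) = 0 ∨
    predVal P (j - pPeriod (j + 1) P) = predVal P j := by
  rcases Nat.eq_zero_or_pos (pPeriod (j+1) P) with h0 | hpos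
  · right; rw [h0, Nat.sub_zero]
  have hne : {ρ' | IsPPeriod (j+2) P ρ'}.Nonempty := by
    by_contra hemp
    rw [Set.not_nonempty_iff_eq_empty] at hemp
    have h2 : pPeriod (j+2) P = 0 := by
      rw [pPeriod, hemp, Nat.sInf_empty]
    rw [h, h2] at hpos
    exact absurd hpos (lt_irrefl 0)
  have hmem : IsPPeriod (j+2) P (pPeriod (j+1) P) := by
    rw [h]
    exact Nat.sInf_mem hne
  set ρ := pPeriod (j+1) P with hρdef
  obtain ⟨hρpos, hρlt, g, hg, hmatch⟩ := hmem
  rcases le_or_gt ρ j with hle | hgt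
  · set i := j - ρ with hidef
    have key : ∀ d, 0 < d → d ≤ i → (P (i - d) = P i ↔ P (j - d) = P j) := by
      intro d hd hdi
      have h1 : P (ρ + (i - d)) = g (P (i - d)) := hmatch _ (by omega)
      have h2 : P (ρ + i) = g (P i) := hmatch _ (by omega)
      have e1 : j - d = ρ + (i - d) := by omega
      have e2 : j = ρ + i := by omega
      constructor
      · intro hh; rw [e1, e2, h1, h2, hh]
      · intro hh; rw [e1, e2, h1, h2] at hh; exact hg hh
    by_cases hDi : {d : ℕ | 0 < d ∧ d ≤ i ∧ P (i - d) = P i}.Nonempty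
    · right
      have hsub : ∀ d ∈ {d : ℕ | 0 < d ∧ d ≤ i ∧ P (i - d) = P i},
          d ∈ {d : ℕ | 0 < d ∧ d ≤ j ∧ P (j - d) = P j} := by
        rintro d ⟨hd, hdi, hdeq⟩
        exact ⟨hd, by omega, (key d hd hdi).mp hdeq⟩
      have hm := Nat.sInf_mem hDi
      have hDj : {d : ℕ | 0 < d ∧ d ≤ j ∧ P (j - d) = P j}.Nonempty :=
        ⟨_, hsub _ hm⟩
      have hn := Nat.sInf_mem hDj
      have h1 : sInf {d : ℕ | 0 < d ∧ d ≤ j ∧ P (j - d) = P j} ≤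
          sInf {d : ℕ | 0 < d ∧ d ≤ i ∧ P (i - d) = P i} :=
        Nat.sInf_le (hsub _ hm)
      have h2 : sInf {d : ℕ | 0 < d ∧ d ≤ i ∧ P (i - d) = P i} ≤
          sInf {d : ℕ | 0 < d ∧ d ≤ j ∧ P (j - d) = P j} := by
        apply Nat.sInf_le
        have hni : sInf {d : ℕ | 0 < d ∧ d ≤ j ∧ P (j - d) = P j} ≤ i :=
          le_trans h1 hm.2.1
        exact ⟨hn.1, hni, (key _ hn.1 hni).mpr hn.2.2⟩
      simp only [predVal]
      omega
    · left
      rw [Set.not_nonempty_iff_eq_empty] at hDi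
      simp only [predVal]
      rw [hDi, Nat.sInf_empty]
  · left
    have hz : j - ρ = 0 := by omega
    rw [hz]
    have hempty : {d : ℕ | 0 < d ∧ d ≤ 0 ∧ P (0 - d) = P 0} = ∅ :=
      Set.eq_empty_iff_forall_notMem.mpr (fun d ⟨h1, h2, _⟩ => by omega)
    simp only [predVal]
    rw [hempty, Nat.sInf_empty]
end
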